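/- arXiv:1601.07299 — 2 statements merged into one kernel-verified Lean document; each statement's English description precedes it below -/
import Mathlib

section
/- Every finite rank algebraic vector bundle on the projective line over an algebraically closed field of characteristic zero is isomorphic to a direct sum of line bundles O(a_1) ⊕ ... ⊕ O(a_r). -/
/-!
After clearing denominators, `T ^ k • M = P(T)` is a polynomial matrix whose determinant is a unit
of `K[T, T⁻¹]`. Whenever the matrix of leading row coefficients of `P` is singular, a unimodular row
operation lowers the sum of the row degrees `dᵢ`; so some `N = U P` with `U ∈ GL_r(K[X])` has
invertible leading row coefficient matrix. Reversing each row of `N` with respect to its degree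
gives `N(T) = diag(T ^ dᵢ) · Ñ(T⁻¹)`, where `Ñ(0)` is that leading coefficient matrix. Hence `det Ñ`
is a polynomial with nonzero constant term that becomes a unit in `K[T, T⁻¹]`, i.e. a nonzero
constant, and `Ñ ∈ GL_r(K[X])`.
-/

open Polynomial LaurentPolynomial Matrix Finset Filter

namespace Polynomial

variable {R : Type*}

theorem aeval_T_one [CommSemiring R] (p : R[X]) : aeval (T 1 : R[T;T⁻¹]) p = toLaurent p := by
  simpa using aeval_algHom_apply toLaurentAlg X p

theorem aeval_T_neg_one [CommSemiring R] (p : R[X]) :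
    aeval (T (-1) : R[T;T⁻¹]) p = invert (toLaurent p) := by
  simpa using aeval_algHom_apply (invert.toAlgHom.comp toLaurentAlg) X p

theorem toLaurent_mem_adjoin_T_one [CommSemiring R] (p : R[X]) :
    toLaurent p ∈ Algebra.adjoin R {(T 1 : R[T;T⁻¹])} :=
  aeval_T_one p ▸ aeval_mem_adjoin_singleton R _

theorem aeval_T_neg_one_reflect_mul_T [CommSemiring R] {N : ℕ} {p : R[X]}
    (hp : p.natDegree ≤ N) : aeval (T (-1) : R[T;T⁻¹]) (reflect N p) * T N = toLaurent p := by
  have := eval₂_reflect_mul_pow (algebraMap R R[T;T⁻¹]) (T 1) N p hp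
  rwa [invOf_T, T_pow, mul_one, ← aeval_def, ← aeval_def, aeval_T_one] at this

theorem isUnit_of_isUnit_toLaurent_of_coeff_zero_ne_zero [CommRing R] [IsDomain R] {q : R[X]}
    (hq : IsUnit (toLaurent q)) (h0 : q.coeff 0 ≠ 0) : IsUnit q := by
  obtain ⟨u, hu⟩ := hq.exists_right_inv
  obtain ⟨n, u', hu'⟩ := exists_T_pow u
  have hdvd : q ∣ X ^ n := ⟨u', toLaurent_injective <| by
    rw [map_mul, hu', ← mul_assoc, hu, one_mul, toLaurent_X_pow]⟩
  obtain ⟨i, -, hi⟩ := (dvd_prime_pow prime_X n).mp hdvd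
  obtain rfl | hi0 := eq_or_ne i 0
  · simpa using hi
  · exact absurd (X_dvd_iff.mp ((dvd_pow_self X hi0).trans hi.symm.dvd)) h0

theorem degree_sum_C_mul_X_pow_mul_lt [Semiring R] {ι : Type*} (s : Finset ι) (c : ι → R)
    (p : ι → R[X]) (e : ι → ℕ) {D : ℕ} (hp : ∀ t ∈ s, (p t).natDegree ≤ e t)
    (he : ∀ t ∈ s, c t ≠ 0 → e t ≤ D) (hc : ∑ t ∈ s, c t * (p t).coeff (e t) = 0) :
    (∑ t ∈ s, C (c t) * X ^ (D - e t) * p t).degree < (D : WithBot ℕ) := by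
  rw [degree_lt_iff_coeff_zero]
  intro k hk
  have hterm : ∀ t ∈ s, (C (c t) * X ^ (D - e t) * p t).coeff k
      = if k = D then c t * (p t).coeff (e t) else 0 := by
    intro t ht
    rw [mul_assoc, coeff_C_mul, coeff_X_pow_mul', if_pos (by omega)]
    obtain hct | hct := eq_or_ne (c t) 0
    · simp [hct]
    have hetD := he t ht hct
    split_ifs with hkD
    · congr 2; omega
    · rw [coeff_eq_zero_of_natDegree_lt (by have := hp t ht; omega), mul_zero]
  rw [finsetSum_coeff, sum_congr rfl hterm]
  split_ifs <;> simp [hc]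

end Polynomial

namespace LaurentPolynomial

variable {R : Type*} [CommSemiring R]

theorem eventually_exists_toLaurent_eq_mul_T (f : R[T;T⁻¹]) :
    ∀ᶠ k : ℕ in atTop, ∃ p : R[X], toLaurent p = f * T k := by
  obtain ⟨n, p, hp⟩ := exists_T_pow f
  filter_upwards [eventually_ge_atTop n] with k hk
  refine ⟨p * X ^ (k - n), ?_⟩
  rw [map_mul, hp, toLaurent_X_pow, mul_assoc, ← T_add]
  congr 2
  omega

end LaurentPolynomial

namespace Matrix

theorem exists_map_toLaurent_eq_T_smul {R m n : Type*} [CommSemiring R] [Finite m] [Finite n]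
    (M : Matrix m n R[T;T⁻¹]) :
    ∃ (k : ℕ) (P : Matrix m n R[X]), P.map toLaurent = (T k : R[T;T⁻¹]) • M := by
  obtain ⟨k, hk⟩ := (eventually_all.2 fun i => eventually_all.2 fun j =>
    eventually_exists_toLaurent_eq_mul_T (M i j)).exists
  choose P hP using hk
  exact ⟨k, of P, ext fun i j => by simp [hP, mul_comm]⟩

section RowDegree

variable {R : Type*} [Semiring R] {m n : Type*} [Fintype n]

def rowNatDegree (N : Matrix m n R[X]) (i : m) : ℕ :=
  univ.sup fun j => (N i j).natDegree

def leadingRowCoeff (N : Matrix m n R[X]) : Matrix m n R :=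
  of fun i j => (N i j).coeff (N.rowNatDegree i)

noncomputable def rowReflect (N : Matrix m n R[X]) : Matrix m n R[X] :=
  of fun i j => reflect (N.rowNatDegree i) (N i j)

theorem natDegree_le_rowNatDegree (N : Matrix m n R[X]) (i : m) (j : n) :
    (N i j).natDegree ≤ N.rowNatDegree i :=
  le_sup (f := fun j => (N i j).natDegree) (mem_univ j)

theorem rowNatDegree_lt_of_degree_lt {N : Matrix m n R[X]} {i : m} {D : ℕ} (hrow : N i ≠ 0)
    (h : ∀ j, (N i j).degree < D) : N.rowNatDegree i < D := by
  obtain ⟨j₀, hj₀⟩ := Function.ne_iff.mp hrow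
  have hD : 0 < D := by exact_mod_cast (zero_le_degree_iff.mpr hj₀).trans_lt (h j₀)
  refine (Finset.sup_lt_iff hD).mpr fun j _ => ?_
  obtain hj | hj := eq_or_ne (N i j) 0
  · simpa [hj] using hD
  · exact (natDegree_lt_iff_degree_lt hj).mpr (h j)

theorem rowReflect_map_eval_zero (N : Matrix m n R[X]) :
    N.rowReflect.map (eval 0) = N.leadingRowCoeff := by
  ext i j
  simp [rowReflect, leadingRowCoeff, ← coeff_zero_eq_eval_zero, coeff_reflect]

end RowDegree

theorem map_toLaurent_eq_diagonal_mul_rowReflect {R m n : Type*} [CommSemiring R] [Fintype m]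
    [Fintype n] [DecidableEq m] (N : Matrix m n R[X]) :
    N.map toLaurent =
      diagonal (fun i => (T (N.rowNatDegree i) : R[T;T⁻¹])) *
        N.rowReflect.map (aeval (T (-1) : R[T;T⁻¹])) := by
  ext i j
  rw [diagonal_mul, map_apply, map_apply, rowReflect, of_apply, mul_comm,
    aeval_T_neg_one_reflect_mul_T (N.natDegree_le_rowNatDegree i j)]

theorem det_one_updateRow {R n : Type*} [CommRing R] [Fintype n] [DecidableEq n] (i : n)
    (v : n → R) : ((1 : Matrix n n R).updateRow i v).det = v i := by
  rw [← transpose_one, updateRow_transpose, det_transpose, ← cramer_apply, cramer_one]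
  rfl

variable {K n : Type*} [Field K] [Fintype n] [DecidableEq n]

theorem exists_sum_rowNatDegree_mul_lt (N : Matrix n n K[X]) (hN : N.det ≠ 0)
    (hL : N.leadingRowCoeff.det = 0) :
    ∃ U : GL n K[X], ∑ i, ((U : Matrix n n K[X]) * N).rowNatDegree i < ∑ i, N.rowNatDegree i := by
  classical
  set d := N.rowNatDegree
  obtain ⟨μ, hμ, hμL⟩ := exists_vecMul_eq_zero_iff.mpr hL
  obtain ⟨i₀, hi₀, hmax⟩ := exists_max_image {i | μ i ≠ 0} d (by
    simpa [Finset.Nonempty] using Function.ne_iff.mp hμ)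
  -- as `d i₀` is maximal on the support of `μ`, adding `∑ μₜ X ^ (d i₀ - d t) • row t` to row `i₀`
  -- cancels its leading terms
  set v : n → K[X] := fun t => Polynomial.C (μ t) * X ^ (d i₀ - d t)
  have hU : IsUnit (updateRow 1 i₀ v).det := by
    simpa [det_one_updateRow, v] using hi₀
  have hUN : updateRow 1 i₀ v * N = N.updateRow i₀ (v ᵥ* N) := by
    rw [updateRow_mul, Matrix.one_mul]
  have hdeg : ∀ j, ((v ᵥ* N) j).degree < d i₀ := fun j =>
    degree_sum_C_mul_X_pow_mul_lt univ μ (N · j) d (fun t _ => N.natDegree_le_rowNatDegree t j)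
      (fun t _ ht => hmax t (by simpa using ht))
      (by simpa [vecMul, dotProduct, leadingRowCoeff] using congrFun hμL j)
  have hrow : v ᵥ* N ≠ 0 := by
    intro h0
    apply mul_ne_zero hU.ne_zero hN
    rw [← det_mul, hUN, h0]
    exact det_eq_zero_of_row_eq_zero i₀ (by simp)
  have hlt : (N.updateRow i₀ (v ᵥ* N)).rowNatDegree i₀ < d i₀ :=
    rowNatDegree_lt_of_degree_lt (by simpa using hrow) (by simpa using hdeg)
  refine ⟨((isUnit_iff_isUnit_det _).mpr hU).unit, ?_⟩
  rw [IsUnit.unit_spec, hUN]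
  refine sum_lt_sum (fun i _ => ?_) ⟨i₀, mem_univ _, hlt⟩
  rcases eq_or_ne i i₀ with rfl | hi
  · exact hlt.le
  · simp [rowNatDegree, updateRow_ne hi, d]

theorem exists_det_leadingRowCoeff_mul_ne_zero (N : Matrix n n K[X]) (hN : N.det ≠ 0) :
    ∃ U : GL n K[X], ((U : Matrix n n K[X]) * N).leadingRowCoeff.det ≠ 0 := by
  induction hs : ∑ i, N.rowNatDegree i using Nat.strong_induction_on generalizing N with
  | _ s ih =>
  by_cases hL : N.leadingRowCoeff.det = 0
  · obtain ⟨U, hU⟩ := exists_sum_rowNatDegree_mul_lt N hN hL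
    have hUN : ((U : Matrix n n K[X]) * N).det ≠ 0 := by
      rw [det_mul]
      exact mul_ne_zero (isUnits_det_units U).ne_zero hN
    obtain ⟨V, hV⟩ := ih _ (hs ▸ hU) _ hUN rfl
    exact ⟨V * U, by simpa [Matrix.mul_assoc] using hV⟩
  · exact ⟨1, by simpa using hL⟩

theorem isUnit_det_rowReflect (N : Matrix n n K[X]) (hN : IsUnit (N.map toLaurent).det)
    (hL : N.leadingRowCoeff.det ≠ 0) : IsUnit N.rowReflect.det := by
  refine isUnit_of_isUnit_toLaurent_of_coeff_zero_ne_zero ?_ ?_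
  · rw [map_toLaurent_eq_diagonal_mul_rowReflect, det_mul] at hN
    have := isUnit_of_mul_isUnit_right hN
    rwa [← AlgHom.mapMatrix_apply, ← AlgHom.map_det, aeval_T_neg_one, isUnit_map_iff] at this
  · rwa [coeff_zero_eq_eval_zero, ← coe_evalRingHom, RingHom.map_det, RingHom.mapMatrix_apply,
      coe_evalRingHom, rowReflect_map_eval_zero]

theorem exists_map_toLaurent_eq_mul_diagonal_mul (P : Matrix n n K[X])
    (hP : IsUnit (P.map toLaurent).det) :
    ∃ (A B : GL n K[X]) (d : n → ℕ),
      P.map toLaurent = (GeneralLinearGroup.map toLaurent A : Matrix n n K[T;T⁻¹]) *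
        diagonal (fun i => T (d i)) *
        (GeneralLinearGroup.map (aeval (T (-1) : K[T;T⁻¹])).toRingHom B : Matrix n n K[T;T⁻¹]) := by
  have hPdet : P.det ≠ 0 := by
    rintro h
    rw [← RingHom.mapMatrix_apply, ← RingHom.map_det, h, map_zero] at hP
    exact not_isUnit_zero hP
  obtain ⟨U, hU⟩ := exists_det_leadingRowCoeff_mul_ne_zero P hPdet
  set N := (U : Matrix n n K[X]) * P
  have hN : IsUnit (N.map toLaurent).det := by
    rw [Matrix.map_mul, det_mul, ← RingHom.mapMatrix_apply, ← RingHom.map_det]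
    exact ((isUnits_det_units U).map _).mul hP
  refine ⟨U⁻¹, ((isUnit_iff_isUnit_det _).mpr (isUnit_det_rowReflect N hN hU)).unit,
    N.rowNatDegree, ?_⟩
  calc P.map toLaurent
      = (GeneralLinearGroup.map toLaurent (U⁻¹ * U) : Matrix n n K[T;T⁻¹]) * P.map toLaurent := by
        simp
    _ = (GeneralLinearGroup.map toLaurent U⁻¹ : Matrix n n K[T;T⁻¹]) * N.map toLaurent := by
        rw [map_mul, Units.val_mul, Matrix.mul_assoc, Matrix.map_mul]
        rfl
    _ = _ := by
        rw [map_toLaurent_eq_diagonal_mul_rowReflect, Matrix.mul_assoc]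
        rfl

end Matrix

/-- `M` is the transition matrix of the bundle over `U₀ ∩ U_∞`, and `A`, `B` are changes of
trivialization over `U₀ = Spec K[x]` and `U_∞ = Spec K[x⁻¹]`. -/
theorem birkhoff_grothendieck_splitting_general (K : Type*) [Field K]
    (r : ℕ) (M : GL (Fin r) (LaurentPolynomial K)) :
    ∃ (a : Fin r → ℤ) (A B : GL (Fin r) (LaurentPolynomial K)),
      (∀ i j, (A : Matrix (Fin r) (Fin r) (LaurentPolynomial K)) i j ∈
          Algebra.adjoin K {LaurentPolynomial.T (R := K) 1}) ∧
      (∀ i j, ((A⁻¹ : GL (Fin r) (LaurentPolynomial K)) :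
          Matrix (Fin r) (Fin r) (LaurentPolynomial K)) i j ∈
          Algebra.adjoin K {LaurentPolynomial.T (R := K) 1}) ∧
      (∀ i j, (B : Matrix (Fin r) (Fin r) (LaurentPolynomial K)) i j ∈
          Algebra.adjoin K {LaurentPolynomial.T (R := K) (-1)}) ∧
      (∀ i j, ((B⁻¹ : GL (Fin r) (LaurentPolynomial K)) :
          Matrix (Fin r) (Fin r) (LaurentPolynomial K)) i j ∈
          Algebra.adjoin K {LaurentPolynomial.T (R := K) (-1)}) ∧
      (M : Matrix (Fin r) (Fin r) (LaurentPolynomial K)) =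
        (A : Matrix (Fin r) (Fin r) (LaurentPolynomial K)) *
          Matrix.diagonal (fun i => LaurentPolynomial.T (a i)) *
          (B : Matrix (Fin r) (Fin r) (LaurentPolynomial K)) := by
  obtain ⟨k, P, hP⟩ := exists_map_toLaurent_eq_T_smul (M : Matrix (Fin r) (Fin r) K[T;T⁻¹])
  have hPunit : IsUnit (P.map toLaurent).det := by
    rw [hP, det_smul]
    exact ((isUnit_T _).pow _).mul (isUnits_det_units M)
  obtain ⟨A, B, d, hAB⟩ := exists_map_toLaurent_eq_mul_diagonal_mul P hPunit
  refine ⟨fun i => d i - k, GeneralLinearGroup.map toLaurent A,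
    GeneralLinearGroup.map (aeval (T (-1) : K[T;T⁻¹])).toRingHom B, fun i j => ?_, fun i j => ?_,
    fun i j => ?_, fun i j => ?_, ?_⟩
  · exact toLaurent_mem_adjoin_T_one _
  · rw [← map_inv]
    exact toLaurent_mem_adjoin_T_one _
  · exact aeval_mem_adjoin_singleton K _
  · rw [← map_inv]
    exact aeval_mem_adjoin_singleton K _
  · calc (M : Matrix (Fin r) (Fin r) K[T;T⁻¹]) = (T (-k) : K[T;T⁻¹]) • P.map toLaurent := by
          rw [hP, smul_smul, ← T_add, neg_add_cancel, T_zero, one_smul]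
      _ = _ := by
          rw [hAB, ← Matrix.smul_mul, ← Matrix.mul_smul, ← diagonal_smul]
          congr 3
          ext i
          rw [Pi.smul_apply, smul_eq_mul, ← T_add, neg_add_eq_sub]

/-- **Birkhoff–Grothendieck splitting.**  Every finite rank algebraic vector bundle on the
projective line `ℙ¹` over an algebraically closed field `K` of characteristic zero is
isomorphic to a direct sum of line bundles `O(a₁) ⊕ ⋯ ⊕ O(aᵣ)`.

A rank `r` algebraic vector bundle on `ℙ¹ = U₀ ∪ U_∞` (with `U₀ = Spec K[x]`,
`U_∞ = Spec K[x⁻¹]`, `U₀ ∩ U_∞ = Spec K[x, x⁻¹]`) is given by its transition matrix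
`M ∈ GL_r(K[x, x⁻¹])` on the overlap, and the bundle splits as `⊕ O(aᵢ)` precisely when
`M = A · diag(xᵃ¹, …, xᵃʳ) · B` with `A ∈ GL_r(K[x])` and `B ∈ GL_r(K[x⁻¹])`
(changes of trivialization on the two charts).  This is the classical Birkhoff
factorization form of the theorem. -/
theorem birkhoff_grothendieck_splitting (K : Type*) [Field K] [IsAlgClosed K] [CharZero K]
    (r : ℕ) (M : GL (Fin r) (LaurentPolynomial K)) :
    ∃ (a : Fin r → ℤ) (A B : GL (Fin r) (LaurentPolynomial K)),
      (∀ i j, (A : Matrix (Fin r) (Fin r) (LaurentPolynomial K)) i j ∈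
          Algebra.adjoin K {LaurentPolynomial.T (R := K) 1}) ∧
      (∀ i j, ((A⁻¹ : GL (Fin r) (LaurentPolynomial K)) :
          Matrix (Fin r) (Fin r) (LaurentPolynomial K)) i j ∈
          Algebra.adjoin K {LaurentPolynomial.T (R := K) 1}) ∧
      (∀ i j, (B : Matrix (Fin r) (Fin r) (LaurentPolynomial K)) i j ∈
          Algebra.adjoin K {LaurentPolynomial.T (R := K) (-1)}) ∧
      (∀ i j, ((B⁻¹ : GL (Fin r) (LaurentPolynomial K)) :
          Matrix (Fin r) (Fin r) (LaurentPolynomial K)) i j ∈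
          Algebra.adjoin K {LaurentPolynomial.T (R := K) (-1)}) ∧
      (M : Matrix (Fin r) (Fin r) (LaurentPolynomial K)) =
        (A : Matrix (Fin r) (Fin r) (LaurentPolynomial K)) *
          Matrix.diagonal (fun i => LaurentPolynomial.T (a i)) *
          (B : Matrix (Fin r) (Fin r) (LaurentPolynomial K)) :=
  birkhoff_grothendieck_splitting_general K r M
end

section
/- Let Φ be a reduced crystallographic root system with base Δ indexed by D, and let I ⊆ D be a subset meeting every connected component of the Dynkin diagram of Φ. With b_t, c_t defined by Σ_{β∈Φ⁺} β = Σ b_t α_t and Σ_{β∈Φ⁺(I)} β = Σ c_t α_t, one has b_j − c_j > 0 for every j ∈ D \ I. -/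
/-!
By linearity, `b j - c j` is the sum of the `j`-coordinates of the positive roots outside
`Φ⁺(I)`, all of which are nonnegative; so it suffices to find one such root with positive
`j`-coordinate. Since distinct simple roots are obtuse, and adding to a root `β` a root `γ` with
`⟪β, γ⟫ < 0` gives a root (unless `γ = -β`), the sum of the simple roots along a Dynkin-diagram
path from `j` to some `i ∈ I` is a positive root. Its coordinates at `j` and `i` are `1`, so it is
not in `Φ⁺(I)`.
-/

open scoped RealInnerProductSpace Classical
open Finset

/-- A finite reduced crystallographic root system in a real inner product space. -/
structure IsRootSystem {V : Type*} [NormedAddCommGroup V] [InnerProductSpace ℝ V]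
    (Φ : Finset V) : Prop where
  zero_not_mem : (0 : V) ∉ Φ
  span_eq_top : Submodule.span ℝ (Φ : Set V) = ⊤
  reflect_mem : ∀ α ∈ Φ, ∀ β ∈ Φ, β - (2 * ⟪β, α⟫ / ⟪α, α⟫) • α ∈ Φ
  crystallographic : ∀ α ∈ Φ, ∀ β ∈ Φ, ∃ n : ℤ, (n : ℝ) = 2 * ⟪β, α⟫ / ⟪α, α⟫
  reduced : ∀ α ∈ Φ, ∀ t : ℝ, t • α ∈ Φ → t = 1 ∨ t = -1

/-- A base (set of simple roots) of a root system, indexed by `ι`: the simple roots are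
linearly independent roots such that every root is a nonnegative or nonpositive integral
combination of them. -/
structure IsBase {V : Type*} [NormedAddCommGroup V] [InnerProductSpace ℝ V] {ι : Type*}
    [Fintype ι] (Φ : Finset V) (α : ι → V) : Prop where
  mem : ∀ i, α i ∈ Φ
  indep : LinearIndependent ℝ α
  decomp : ∀ β ∈ Φ, (∃ c : ι → ℕ, β = ∑ i, (c i : ℝ) • α i) ∨
      (∃ c : ι → ℕ, β = -∑ i, (c i : ℝ) • α i)

/-- The set of positive roots with respect to a base. -/
noncomputable def posRoots {V : Type*} [NormedAddCommGroup V] [InnerProductSpace ℝ V]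
    {ι : Type*} [Fintype ι] (Φ : Finset V) (α : ι → V) : Finset V :=
  Φ.filter fun β => ∃ c : ι → ℕ, β = ∑ i, (c i : ℝ) • α i

/-- `Φ⁺(I)`: the positive roots supported on the simple roots indexed by the complement
of `I`, i.e. whose coefficient at `α i` vanishes for every `i ∈ I`. -/
noncomputable def posRootsOn {V : Type*} [NormedAddCommGroup V] [InnerProductSpace ℝ V]
    {ι : Type*} [Fintype ι] (Φ : Finset V) (α : ι → V) (I : Finset ι) : Finset V :=
  Φ.filter fun β => ∃ c : ι → ℕ, (∀ i ∈ I, c i = 0) ∧ β = ∑ i, (c i : ℝ) • α i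

lemma sum_eq_sum_boole_natCast_smul {ι M : Type*} [Fintype ι] [AddCommMonoid M] [Module ℝ M]
    (S : Finset ι) (v : ι → M) :
    ∑ t ∈ S, v t = ∑ t, ((if t ∈ S then 1 else 0 : ℕ) : ℝ) • v t := by
  simp [ite_smul, Finset.sum_ite_mem]

namespace IsRootSystem

variable {V : Type*} [NormedAddCommGroup V] [InnerProductSpace ℝ V] {Φ : Finset V}

lemma ne_zero_of_mem (hΦ : IsRootSystem Φ) {β : V} (hβ : β ∈ Φ) : β ≠ 0 :=
  fun h => hΦ.zero_not_mem (h ▸ hβ)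

lemma eq_neg_of_inner_eq_neg_norm_mul_norm (hΦ : IsRootSystem Φ) {β γ : V} (hβ : β ∈ Φ)
    (hγ : γ ∈ Φ) (h : ⟪β, γ⟫ = -(‖β‖ * ‖γ‖)) : γ = -β := by
  have hβγ : ‖β‖ * ‖γ‖ ≠ 0 :=
    mul_ne_zero (norm_ne_zero_iff.2 (hΦ.ne_zero_of_mem hβ))
      (norm_ne_zero_iff.2 (hΦ.ne_zero_of_mem hγ))
  obtain ⟨-, r, hr, rfl⟩ := (real_inner_div_norm_mul_norm_eq_neg_one_iff β γ).1 <| by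
    rw [h, neg_div, div_self hβγ]
  rcases hΦ.reduced β hβ r hγ with rfl | rfl
  · exact absurd hr one_pos.not_gt
  · exact neg_one_smul ℝ β

lemma add_mem_of_inner_neg (hΦ : IsRootSystem Φ) {β γ : V} (hβ : β ∈ Φ) (hγ : γ ∈ Φ)
    (hneg : ⟪β, γ⟫ < 0) (hne : β + γ ≠ 0) : β + γ ∈ Φ := by
  obtain ⟨m, hm⟩ := hΦ.crystallographic γ hγ β hβ
  obtain ⟨n, hn⟩ := hΦ.crystallographic β hβ γ hγ
  have hββ : 0 < ⟪β, β⟫ := real_inner_self_pos.2 (hΦ.ne_zero_of_mem hβ)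
  have hγγ : 0 < ⟪γ, γ⟫ := real_inner_self_pos.2 (hΦ.ne_zero_of_mem hγ)
  have hm' : (m : ℝ) * ⟪γ, γ⟫ = 2 * ⟪β, γ⟫ := by rw [hm]; field_simp
  have hn' : (n : ℝ) * ⟪β, β⟫ = 2 * ⟪β, γ⟫ := by rw [hn, real_inner_comm]; field_simp
  have hm0 : m < 0 := by exact_mod_cast (show (m : ℝ) < 0 by nlinarith)
  have hn0 : n < 0 := by exact_mod_cast (show (n : ℝ) < 0 by nlinarith)
  by_cases hm1 : m = -1
  · have h := hΦ.reflect_mem γ hγ β hβ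
    rwa [← hm, hm1, Int.cast_neg, Int.cast_one, neg_one_smul, sub_neg_eq_add] at h
  by_cases hn1 : n = -1
  · have h := hΦ.reflect_mem β hβ γ hγ
    rwa [← hn, hn1, Int.cast_neg, Int.cast_one, neg_one_smul, sub_neg_eq_add, add_comm] at h
  -- Both Cartan integers are `≤ -2`, which forces equality in Cauchy–Schwarz.
  exfalso
  have hm2 : (m : ℝ) ≤ -2 := by exact_mod_cast (show m ≤ -2 by omega)
  have hn2 : (n : ℝ) ≤ -2 := by exact_mod_cast (show n ≤ -2 by omega)
  have hcs : ‖β‖ ^ 2 * ‖γ‖ ^ 2 ≤ ⟪β, γ⟫ ^ 2 := by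
    rw [← real_inner_self_eq_norm_sq, ← real_inner_self_eq_norm_sq]
    have hmn : (m * n : ℝ) * (⟪β, β⟫ * ⟪γ, γ⟫) = 4 * ⟪β, γ⟫ ^ 2 := by
      linear_combination (n * ⟪β, β⟫) * hm' + (2 * ⟪β, γ⟫) * hn'
    have h4 : 4 ≤ (m * n : ℝ) := by nlinarith
    nlinarith [mul_le_mul_of_nonneg_right h4 (mul_pos hββ hγγ).le]
  have heq : ⟪β, γ⟫ = -(‖β‖ * ‖γ‖) := by
    nlinarith [abs_real_inner_le_norm β γ, abs_of_neg hneg, norm_nonneg β, norm_nonneg γ]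
  exact hne (by rw [hΦ.eq_neg_of_inner_eq_neg_norm_mul_norm hβ hγ heq, add_neg_cancel])

end IsRootSystem

namespace IsBase

variable {V : Type*} [NormedAddCommGroup V] [InnerProductSpace ℝ V] {ι : Type*} [Fintype ι]
  {Φ : Finset V} {α : ι → V}

noncomputable def basis (hα : IsBase Φ α) (hΦ : IsRootSystem Φ) : Module.Basis ι ℝ V :=
  Module.Basis.mk hα.indep <| by
    rw [← hΦ.span_eq_top, Submodule.span_le]
    intro β hβ
    have hmem : ∀ c : ι → ℕ, ∑ i, (c i : ℝ) • α i ∈ Submodule.span ℝ (Set.range α) :=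
      fun c => Submodule.sum_mem _ fun i _ =>
        Submodule.smul_mem _ _ (Submodule.subset_span ⟨i, rfl⟩)
    rcases hα.decomp β hβ with ⟨c, rfl⟩ | ⟨c, rfl⟩
    exacts [hmem c, Submodule.neg_mem _ (hmem c)]

@[simp]
lemma basis_apply (hα : IsBase Φ α) (hΦ : IsRootSystem Φ) (i : ι) : hα.basis hΦ i = α i :=
  Module.Basis.mk_apply _ _ i

@[simp]
lemma basis_repr_self (hα : IsBase Φ α) (hΦ : IsRootSystem Φ) (i : ι) :
    (hα.basis hΦ).repr (α i) = Finsupp.single i 1 := by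
  rw [← basis_apply hα hΦ, Module.Basis.repr_self]

@[simp]
lemma basis_repr_sum_smul (hα : IsBase Φ α) (hΦ : IsRootSystem Φ) (c : ι → ℝ) :
    (hα.basis hΦ).repr (∑ i, c i • α i) = c := by
  simpa using (hα.basis hΦ).repr_sum_self c

lemma basis_repr_nonneg_or_nonpos (hα : IsBase Φ α) (hΦ : IsRootSystem Φ) {β : V}
    (hβ : β ∈ Φ) :
    (∀ i, 0 ≤ (hα.basis hΦ).repr β i) ∨ (∀ i, (hα.basis hΦ).repr β i ≤ 0) := by
  rcases hα.decomp β hβ with ⟨c, rfl⟩ | ⟨c, rfl⟩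
  · exact Or.inl fun i => by rw [basis_repr_sum_smul]; positivity
  · exact Or.inr fun i => by
      rw [map_neg, Finsupp.neg_apply, basis_repr_sum_smul, neg_nonpos]; positivity

lemma inner_le_zero (hα : IsBase Φ α) (hΦ : IsRootSystem Φ) {s t : ι} (hst : s ≠ t) :
    ⟪α s, α t⟫ ≤ 0 := by
  by_contra! hpos
  obtain ⟨n, hn⟩ := hΦ.crystallographic (α t) (hα.mem t) (α s) (hα.mem s)
  have hn0 : 0 < n := by
    rw [← Int.cast_pos (R := ℝ), hn]
    exact div_pos (by linarith) (real_inner_self_pos.2 (hΦ.ne_zero_of_mem (hα.mem t)))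
  have hγ := hΦ.reflect_mem (α t) (hα.mem t) (α s) (hα.mem s)
  rw [← hn] at hγ
  -- The root `α s - n • α t` would have coordinates `1` at `s` and `-n < 0` at `t`.
  rcases hα.basis_repr_nonneg_or_nonpos hΦ hγ with h | h
  · have := h t
    simp [hst] at this
    omega
  · have := h s
    simp [hst.symm] at this
    linarith

lemma basis_repr_sum (hα : IsBase Φ α) (hΦ : IsRootSystem Φ) (S : Finset ι) (i : ι) :
    (hα.basis hΦ).repr (∑ t ∈ S, α t) i = if i ∈ S then 1 else 0 := by
  rw [sum_eq_sum_boole_natCast_smul, basis_repr_sum_smul]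
  split_ifs <;> simp

lemma sum_insert_mem_of_inner_ne_zero (hα : IsBase Φ α) (hΦ : IsRootSystem Φ) {S : Finset ι}
    {s t : ι} (hS : ∑ u ∈ S, α u ∈ Φ) (hs : s ∈ S) (ht : t ∉ S) (hst : ⟪α s, α t⟫ ≠ 0) :
    ∑ u ∈ insert t S, α u ∈ Φ := by
  rw [sum_insert ht, add_comm]
  refine hΦ.add_mem_of_inner_neg hS (hα.mem t) ?_ ?_
  · rw [sum_inner]
    exact sum_neg' (fun u hu => hα.inner_le_zero hΦ (ne_of_mem_of_not_mem hu ht))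
      ⟨s, hs, (hα.inner_le_zero hΦ (ne_of_mem_of_not_mem hs ht)).lt_of_ne hst⟩
  · rw [add_comm, ← sum_insert ht]
    intro h0
    simpa using linearIndependent_iff'.1 hα.indep (insert t S) 1 (by simpa using h0) t
      (mem_insert_self t S)

lemma exists_sum_mem_of_reflTransGen (hα : IsBase Φ α) (hΦ : IsRootSystem Φ) {j i : ι}
    (h : Relation.ReflTransGen (fun s t => s ≠ t ∧ ⟪α s, α t⟫ ≠ 0) j i) :
    ∃ S : Finset ι, j ∈ S ∧ i ∈ S ∧ ∑ t ∈ S, α t ∈ Φ := by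
  induction h with
  | refl => exact ⟨{j}, mem_singleton_self j, mem_singleton_self j, by simpa using hα.mem j⟩
  | @tail s t _ hst ih =>
    obtain ⟨S, hjS, hsS, hS⟩ := ih
    by_cases htS : t ∈ S
    · exact ⟨S, hjS, htS, hS⟩
    · exact ⟨insert t S, mem_insert_of_mem hjS, mem_insert_self t S,
        hα.sum_insert_mem_of_inner_ne_zero hΦ hS hsS htS hst.2⟩

lemma basis_repr_nonneg_of_mem_posRoots (hα : IsBase Φ α) (hΦ : IsRootSystem Φ) {β : V}
    (hβ : β ∈ posRoots Φ α) (i : ι) : 0 ≤ (hα.basis hΦ).repr β i := by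
  obtain ⟨-, c, rfl⟩ := mem_filter.1 hβ
  rw [basis_repr_sum_smul]
  positivity

lemma basis_repr_eq_zero_of_mem_posRootsOn (hα : IsBase Φ α) (hΦ : IsRootSystem Φ)
    {I : Finset ι} {β : V} (hβ : β ∈ posRootsOn Φ α I) {i : ι} (hi : i ∈ I) :
    (hα.basis hΦ).repr β i = 0 := by
  obtain ⟨-, c, hc, rfl⟩ := mem_filter.1 hβ
  rw [basis_repr_sum_smul, hc i hi, Nat.cast_zero]

lemma sum_basis_repr_eq (hα : IsBase Φ α) (hΦ : IsRootSystem Φ) {s : Finset V} {b : ι → ℝ}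
    (h : ∑ β ∈ s, β = ∑ t, b t • α t) (j : ι) : ∑ β ∈ s, (hα.basis hΦ).repr β j = b j := by
  rw [← Finsupp.finsetSum_apply, ← map_sum, h, basis_repr_sum_smul]

end IsBase

section PositiveRoots

variable {V : Type*} [NormedAddCommGroup V] [InnerProductSpace ℝ V] {ι : Type*} [Fintype ι]
  {Φ : Finset V} {α : ι → V}

lemma posRootsOn_subset_posRoots (I : Finset ι) : posRootsOn Φ α I ⊆ posRoots Φ α :=
  fun _ hβ => by
    obtain ⟨hβ, c, -, hc⟩ := mem_filter.1 hβ
    exact mem_filter.2 ⟨hβ, c, hc⟩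

lemma sum_mem_posRoots {S : Finset ι} (hS : ∑ t ∈ S, α t ∈ Φ) : ∑ t ∈ S, α t ∈ posRoots Φ α :=
  mem_filter.2 ⟨hS, _, sum_eq_sum_boole_natCast_smul S α⟩

end PositiveRoots

/-- If `I ⊆ D` meets every connected component of the Dynkin diagram (whose edges join
`s ≠ t` with `⟪α s, α t⟫ ≠ 0`), then `b j - c j > 0` for every `j ∉ I`, where
`∑_{β∈Φ⁺} β = ∑ b t • α t` and `∑_{β∈Φ⁺(I)} β = ∑ c t • α t`. -/
theorem coeffs_strict_of_meets_components {V : Type*} [NormedAddCommGroup V]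
    [InnerProductSpace ℝ V] {ι : Type*} [Fintype ι] (Φ : Finset V) (α : ι → V)
    (hΦ : IsRootSystem Φ) (hα : IsBase Φ α) (I : Finset ι)
    (hI : ∀ j : ι, ∃ i ∈ I, Relation.ReflTransGen (fun s t => s ≠ t ∧ ⟪α s, α t⟫ ≠ 0) j i)
    (b c : ι → ℝ)
    (hb : ∑ β ∈ posRoots Φ α, β = ∑ t, b t • α t)
    (hc : ∑ β ∈ posRootsOn Φ α I, β = ∑ t, c t • α t) :
    ∀ j ∉ I, 0 < b j - c j := by
  intro j _
  obtain ⟨i, hiI, hji⟩ := hI j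
  obtain ⟨S, hjS, hiS, hS⟩ := hα.exists_sum_mem_of_reflTransGen hΦ hji
  rw [← hα.sum_basis_repr_eq hΦ hb, ← hα.sum_basis_repr_eq hΦ hc,
    ← sum_sdiff_eq_sub (posRootsOn_subset_posRoots I)]
  refine sum_pos' (fun β hβ => hα.basis_repr_nonneg_of_mem_posRoots hΦ (mem_sdiff.1 hβ).1 j)
    ⟨∑ t ∈ S, α t, mem_sdiff.2 ⟨sum_mem_posRoots hS, fun hSI => ?_⟩, by
      rw [hα.basis_repr_sum hΦ, if_pos hjS]; exact one_pos⟩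
  have hi := hα.basis_repr_eq_zero_of_mem_posRootsOn hΦ hSI hiI
  rw [hα.basis_repr_sum hΦ, if_pos hiS] at hi
  exact one_ne_zero hi
end
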